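/- Let d, m, n be positive natural numbers and let A be an m×n row-stochastic real matrix with a quantum implementation in dimension d given by states ρ_1,…,ρ_m and POVM effects M_1,…,M_n, and suppose λmax(A) = d. Then for every j with M_j ≠ 0 there exists an index i such that ρ_i is a rank-one orthogonal projection (ρ_i² = ρ_i and ρ_i is Hermitian of rank 1) and M_j = (tr M_j) · ρ_i; in particular the state ensemble contains the pure eigenstate of each nonzero effect. -/

import Mathlib

open Matrix BigOperators
open scoped ComplexOrder

/-- A real matrix is row-stochastic if all entries are nonnegative
and each row sums to 1. -/
def RowStochastic {m n : ℕ} (A : Matrix (Fin m) (Fin n) ℝ) : Prop :=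
  (∀ i j, 0 ≤ A i j) ∧ ∀ i, ∑ j, A i j = 1

/-- `A` admits a quantum implementation in dimension `d`: there are states
`ρ i` (PSD, trace one) and POVM effects `M j` (PSD, summing to the identity)
with `A i j = Re (tr (ρ i * M j))`. -/
def QuantumImpl (d m n : ℕ) (A : Matrix (Fin m) (Fin n) ℝ) : Prop :=
  ∃ (ρ : Fin m → Matrix (Fin d) (Fin d) ℂ) (M : Fin n → Matrix (Fin d) (Fin d) ℂ),
    (∀ i, (ρ i).PosSemidef ∧ (ρ i).trace = 1) ∧
    (∀ j, (M j).PosSemidef) ∧ (∑ j, M j = 1) ∧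
    (∀ i j, A i j = ((ρ i * M j).trace).re)

/-- The max monotone `λmax(A) = Σ_j max_i A i j`. -/
noncomputable def lmax {m n : ℕ} (A : Matrix (Fin m) (Fin n) ℝ) : ℝ :=
  ∑ j, ⨆ i, A i j

/-- The min monotone `λmin(A) = −Σ_j min_i A i j`. -/
noncomputable def lmin {m n : ℕ} (A : Matrix (Fin m) (Fin n) ℝ) : ℝ :=
  - ∑ j, ⨅ i, A i j

/-- `UWMaj B A` : `B` is ultraweakly majorized by `A` (i.e. `B ⪯ A`),
meaning `B = L * A * R` for some row-stochastic `L`, `R`. -/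
def UWMaj {m' n' m n : ℕ} (B : Matrix (Fin m') (Fin n') ℝ)
    (A : Matrix (Fin m) (Fin n) ℝ) : Prop :=
  ∃ (L : Matrix (Fin m') (Fin m) ℝ) (R : Matrix (Fin n) (Fin n') ℝ),
    RowStochastic L ∧ RowStochastic R ∧ L * A * R = B

/-!
A state `ρ` satisfies `0 ≤ ρ ≤ 1`, so `Re tr (ρ M) ≤ tr M` for every effect `M`, and summing the
column maxima gives `λmax(A) ≤ Σ_j tr M_j = tr 1 = d`. Equality forces, for every `j`, some
state `ρ_i` with `tr ((1 - ρ_i) M_j) = 0`, i.e. `ρ_i M_j = M_j`. If `M_j ≠ 0` this makes `1` an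
eigenvalue of `ρ_i`; as the eigenvalues of a state are nonnegative with sum `1`, `ρ_i = u u*` for a
unit vector `u`, and then `M_j = ρ_i M_j ρ_i = ⟨u, M_j u⟩ ρ_i = (tr M_j) ρ_i`.
-/

lemma Pi.eq_single_of_nonneg_of_sum_eq {ι : Type*} [Fintype ι] [DecidableEq ι] {f : ι → ℝ}
    (hf : 0 ≤ f) (k : ι) (hsum : ∑ i, f i = f k) : f = Pi.single k (f k) := by
  have hrest : ∑ i ∈ Finset.univ.erase k, f i = 0 := by
    linarith [Finset.add_sum_erase Finset.univ f (Finset.mem_univ k)]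
  funext i
  by_cases hik : i = k
  · subst hik; simp
  · rw [Pi.single_eq_of_ne hik]
    exact (Finset.sum_eq_zero_iff_of_nonneg (fun j _ => hf j)).mp hrest i
      (Finset.mem_erase.mpr ⟨hik, Finset.mem_univ i⟩)

namespace Matrix

variable {n 𝕜 : Type*} [Fintype n] [RCLike 𝕜]

lemma PosSemidef.exists_eq_conjTranspose_mul_self {A : Matrix n n 𝕜} (hA : A.PosSemidef) :
    ∃ C : Matrix n n 𝕜, A = Cᴴ * C := by
  classical
  open scoped MatrixOrder in
  exact CStarAlgebra.nonneg_iff_eq_star_mul_self.mp hA.nonneg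

lemma PosSemidef.trace_mul_nonneg {A B : Matrix n n 𝕜} (hA : A.PosSemidef) (hB : B.PosSemidef) :
    0 ≤ (A * B).trace := by
  obtain ⟨C, rfl⟩ := hB.exists_eq_conjTranspose_mul_self
  rw [← Matrix.mul_assoc, trace_mul_cycle]
  exact (hA.mul_mul_conjTranspose_same C).trace_nonneg

lemma PosSemidef.mul_eq_zero_of_trace_mul_eq_zero {A B : Matrix n n 𝕜} (hA : A.PosSemidef)
    (hB : B.PosSemidef) (h : (A * B).trace = 0) : A * B = 0 := by
  obtain ⟨C, rfl⟩ := hB.exists_eq_conjTranspose_mul_self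
  obtain ⟨D, rfl⟩ := hA.exists_eq_conjTranspose_mul_self
  rw [← Matrix.mul_assoc, trace_mul_cycle,
    ((posSemidef_conjTranspose_mul_self D).mul_mul_conjTranspose_same C).trace_eq_zero_iff] at h
  have hDC : D * Cᴴ = 0 := by
    rw [← conjTranspose_mul_self_eq_zero, conjTranspose_mul, conjTranspose_conjTranspose]
    simpa only [Matrix.mul_assoc] using h
  calc Dᴴ * D * (Cᴴ * C) = Dᴴ * (D * Cᴴ) * C := by simp only [Matrix.mul_assoc]
    _ = 0 := by rw [hDC, Matrix.mul_zero, Matrix.zero_mul]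

lemma exists_mulVec_eq_self_of_mul_eq_self {R : Type*} [Semiring R] {A B : Matrix n n R}
    (hB : B ≠ 0) (h : A * B = B) : ∃ v ≠ 0, A *ᵥ v = v := by
  obtain ⟨x, hx⟩ : ∃ x, B *ᵥ x ≠ 0 := by
    by_contra! hBx
    exact hB (ext_iff_mulVec.mpr fun x => by simpa using hBx x)
  exact ⟨B *ᵥ x, hx, by rw [mulVec_mulVec, h]⟩

lemma vecMulVec_star_mul_mul (u : n → 𝕜) (X : Matrix n n 𝕜) :
    vecMulVec u (star u) * X * vecMulVec u (star u) =
      (star u ⬝ᵥ X *ᵥ u) • vecMulVec u (star u) := by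
  rw [vecMulVec_mul, vecMulVec_mul_vecMulVec, vecMulVec_smul, dotProduct_mulVec]

lemma vecMulVec_star_mul_self {u : n → 𝕜} (hu : star u ⬝ᵥ u = 1) :
    vecMulVec u (star u) * vecMulVec u (star u) = vecMulVec u (star u) := by
  rw [vecMulVec_mul_vecMulVec, hu, one_smul]

lemma eq_trace_smul_of_vecMulVec_star_mul_eq_self {u : n → 𝕜} (hu : star u ⬝ᵥ u = 1)
    {M : Matrix n n 𝕜} (hM : M.IsHermitian) (h : vecMulVec u (star u) * M = M) :
    M = M.trace • vecMulVec u (star u) := by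
  have hMP : M * vecMulVec u (star u) = M := by
    simpa [conjTranspose_mul, hM.eq, conjTranspose_vecMulVec] using congrArg conjTranspose h
  have hM' : M = (star u ⬝ᵥ M *ᵥ u) • vecMulVec u (star u) := by
    rw [← vecMulVec_star_mul_mul, h, hMP]
  have htr : M.trace = star u ⬝ᵥ M *ᵥ u := by
    conv_lhs => rw [hM', trace_smul, trace_vecMulVec, dotProduct_comm u, hu, smul_eq_mul, mul_one]
  rwa [htr]

section DecidableEq

variable [DecidableEq n]

lemma IsHermitian.sum_eigenvalues_eq_one {A : Matrix n n 𝕜} (hA : A.IsHermitian)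
    (htr : A.trace = 1) : ∑ i, hA.eigenvalues i = 1 := by
  have h := hA.trace_eq_sum_eigenvalues
  rw [htr] at h
  exact_mod_cast h.symm

lemma PosSemidef.eigenvalues_le_one {A : Matrix n n 𝕜} (hA : A.PosSemidef) (htr : A.trace = 1)
    (i : n) : hA.1.eigenvalues i ≤ 1 :=
  hA.1.sum_eigenvalues_eq_one htr ▸
    Finset.single_le_sum (fun j _ => hA.eigenvalues_nonneg j) (Finset.mem_univ i)

lemma PosSemidef.one_sub_of_trace_eq_one {A : Matrix n n 𝕜} (hA : A.PosSemidef) (htr : A.trace = 1) :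
    (1 - A).PosSemidef := by
  refine posSemidef_iff_isHermitian_and_spectrum_nonneg.mpr
    ⟨isHermitian_one.sub hA.1, fun z hz => ?_⟩
  rw [← map_one (algebraMap 𝕜 (Matrix n n 𝕜)), ← spectrum.singleton_sub_eq,
    hA.1.spectrum_eq_image_range] at hz
  obtain ⟨_, rfl, _, ⟨_, ⟨i, rfl⟩, rfl⟩, rfl⟩ := hz
  show (0 : 𝕜) ≤ 1 - (hA.1.eigenvalues i : 𝕜)
  rw [← RCLike.ofReal_one, ← RCLike.ofReal_sub, RCLike.ofReal_nonneg, sub_nonneg]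
  exact hA.eigenvalues_le_one htr i

lemma PosSemidef.re_trace_mul_le_re_trace {ρ M : Matrix n n 𝕜} (hρ : ρ.PosSemidef)
    (htr : ρ.trace = 1) (hM : M.PosSemidef) : RCLike.re (ρ * M).trace ≤ RCLike.re M.trace := by
  have h := RCLike.nonneg_iff.mp ((hρ.one_sub_of_trace_eq_one htr).trace_mul_nonneg hM)
  rw [sub_mul, one_mul, trace_sub, map_sub] at h
  exact sub_nonneg.mp h.1

lemma PosSemidef.mul_eq_self_of_re_trace_mul_eq {ρ M : Matrix n n 𝕜} (hρ : ρ.PosSemidef)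
    (htr : ρ.trace = 1) (hM : M.PosSemidef) (h : RCLike.re (ρ * M).trace = RCLike.re M.trace) :
    ρ * M = M := by
  have hnonneg := RCLike.nonneg_iff.mp ((hρ.one_sub_of_trace_eq_one htr).trace_mul_nonneg hM)
  have hzero : ((1 - ρ) * M).trace = 0 := by
    refine RCLike.ext ?_ (hnonneg.2.trans (map_zero _).symm)
    rw [sub_mul, one_mul, trace_sub, map_sub, h, sub_self, map_zero]
  have := (hρ.one_sub_of_trace_eq_one htr).mul_eq_zero_of_trace_mul_eq_zero hM hzero
  rwa [sub_mul, one_mul, sub_eq_zero, eq_comm] at this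

lemma IsHermitian.exists_eigenvalues_eq_one {A : Matrix n n 𝕜} (hA : A.IsHermitian) {v : n → 𝕜}
    (hv : v ≠ 0) (hAv : A *ᵥ v = v) : ∃ k, hA.eigenvalues k = 1 := by
  have h1 : (1 : 𝕜) ∈ spectrum 𝕜 A := by
    rw [spectrum.mem_iff, map_one, ← mulVec_injective_iff_isUnit]
    exact fun hinj => hv (hinj (by rw [sub_mulVec, one_mulVec, hAv, sub_self, mulVec_zero]))
  rw [hA.spectrum_eq_image_range] at h1
  obtain ⟨_, ⟨k, rfl⟩, hk⟩ := h1
  exact ⟨k, by exact_mod_cast hk⟩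

lemma PosSemidef.eigenvalues_eq_single_of_mulVec_eq_self {A : Matrix n n 𝕜} (hA : A.PosSemidef)
    (htr : A.trace = 1) {v : n → 𝕜} (hv : v ≠ 0) (hAv : A *ᵥ v = v) :
    ∃ k, hA.1.eigenvalues = Pi.single k 1 := by
  obtain ⟨k, hk⟩ := hA.1.exists_eigenvalues_eq_one hv hAv
  refine ⟨k, hk ▸ Pi.eq_single_of_nonneg_of_sum_eq hA.eigenvalues_nonneg k ?_⟩
  rw [hk, hA.1.sum_eigenvalues_eq_one htr]

lemma IsHermitian.exists_eq_vecMulVec_of_eigenvalues_eq_single {A : Matrix n n 𝕜}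
    (hA : A.IsHermitian) {k : n} (hk : hA.eigenvalues = Pi.single k 1) :
    ∃ u : n → 𝕜, star u ⬝ᵥ u = 1 ∧ A = vecMulVec u (star u) := by
  refine ⟨hA.eigenvectorBasis k, ?_, ?_⟩
  · rw [dotProduct_comm, ← EuclideanSpace.inner_eq_star_dotProduct, inner_self_eq_norm_sq_to_K,
      hA.eigenvectorBasis.orthonormal.1 k]
    simp
  have hdiag : (RCLike.ofReal ∘ hA.eigenvalues : n → 𝕜) = Pi.single k 1 := by
    funext i; by_cases hi : i = k <;> simp [hk, hi]
  conv_lhs => rw [hA.spectral_theorem, Unitary.conjStarAlgAut_apply, hdiag, diagonal_single,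
    single_eq_single_vecMulVec_single, mul_vecMulVec, vecMulVec_mul, eigenvectorUnitary_mulVec]
  rw [← eigenvectorUnitary_mulVec, star_mulVec, Pi.star_single, star_one, star_eq_conjTranspose]

lemma IsHermitian.rank_eq_one_of_eigenvalues_eq_single {A : Matrix n n 𝕜} (hA : A.IsHermitian)
    {k : n} (hk : hA.eigenvalues = Pi.single k 1) : A.rank = 1 := by
  rw [hA.rank_eq_card_non_zero_eigs, Fintype.card_eq_one_iff]
  refine ⟨⟨k, by simp [hk]⟩, fun ⟨i, hi⟩ => Subtype.ext ?_⟩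
  by_contra hik
  simp [hk, hik] at hi

end DecidableEq

end Matrix

theorem ensemble_contains_eigenstates_general (d m n : ℕ) (hm : 0 < m)
    (A : Matrix (Fin m) (Fin n) ℝ)
    (ρ : Fin m → Matrix (Fin d) (Fin d) ℂ) (M : Fin n → Matrix (Fin d) (Fin d) ℂ)
    (hρ : ∀ i, (ρ i).PosSemidef ∧ (ρ i).trace = 1)
    (hM : ∀ j, (M j).PosSemidef) (hMsum : ∑ j, M j = 1)
    (himpl : ∀ i j, A i j = ((ρ i * M j).trace).re)
    (hlmax : lmax A = d) :
    ∀ j, M j ≠ 0 → ∃ i, (ρ i).IsHermitian ∧ ρ i * ρ i = ρ i ∧ (ρ i).rank = 1 ∧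
      M j = (M j).trace • ρ i := by
  intro j hMj
  have : Nonempty (Fin m) := ⟨⟨0, hm⟩⟩
  have hle : ∀ i j, A i j ≤ ((M j).trace).re := fun i j => by
    simpa [himpl] using (hρ i).1.re_trace_mul_le_re_trace (hρ i).2 (hM j)
  have hsum : ∑ j, ((M j).trace).re = d := by
    rw [← Complex.re_sum, ← trace_sum, hMsum, trace_one]
    simp
  have hsup : ∀ j, ⨆ i, A i j = ((M j).trace).re := fun j =>
    (Finset.sum_eq_sum_iff_of_le fun j _ => ciSup_le (hle · j)).mp (hlmax.trans hsum.symm) j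
      (Finset.mem_univ j)
  obtain ⟨i, hi⟩ := exists_eq_ciSup_of_finite (f := fun i => A i j)
  have hρM : ρ i * M j = M j := (hρ i).1.mul_eq_self_of_re_trace_mul_eq (hρ i).2 (hM j)
    (by simpa [himpl] using hi.trans (hsup j))
  obtain ⟨v, hv, hρv⟩ := exists_mulVec_eq_self_of_mul_eq_self hMj hρM
  obtain ⟨k, hk⟩ := (hρ i).1.eigenvalues_eq_single_of_mulVec_eq_self (hρ i).2 hv hρv
  obtain ⟨u, hu, hρu⟩ := (hρ i).1.1.exists_eq_vecMulVec_of_eigenvalues_eq_single hk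
  refine ⟨i, (hρ i).1.1, ?_, (hρ i).1.1.rank_eq_one_of_eigenvalues_eq_single hk, ?_⟩
  · rw [hρu]
    exact vecMulVec_star_mul_self hu
  · rw [hρu] at hρM ⊢
    exact eq_trace_smul_of_vecMulVec_star_mul_eq_self hu (hM j).1 hρM

/-- if `λmax(A) = d`, then for every nonzero effect `M j` the state
ensemble contains a pure state (rank-one projection) `ρ i` which is the pure
eigenstate of `M j`, i.e. `M j = (tr M j) • ρ i`. -/
theorem ensemble_contains_eigenstates (d m n : ℕ) (hd : 0 < d) (hm : 0 < m) (hn : 0 < n)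
    (A : Matrix (Fin m) (Fin n) ℝ) (hA : RowStochastic A)
    (ρ : Fin m → Matrix (Fin d) (Fin d) ℂ) (M : Fin n → Matrix (Fin d) (Fin d) ℂ)
    (hρ : ∀ i, (ρ i).PosSemidef ∧ (ρ i).trace = 1)
    (hM : ∀ j, (M j).PosSemidef) (hMsum : ∑ j, M j = 1)
    (himpl : ∀ i j, A i j = ((ρ i * M j).trace).re)
    (hlmax : lmax A = d) :
    ∀ j, M j ≠ 0 → ∃ i, (ρ i).IsHermitian ∧ ρ i * ρ i = ρ i ∧ (ρ i).rank = 1 ∧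
      M j = (M j).trace • ρ i :=
  ensemble_contains_eigenstates_general d m n hm A ρ M hρ hM hMsum himpl hlmax
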